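/- Let $H$ be a real $k \times N$ matrix whose rows are pairwise orthogonal and each have $\ell_2$ norm exactly $L$ (e.g., $k$ rows of a $2^d \times 2^d$ Hadamard matrix with $N = 2^d$, $L = 2^{d/2}$), and suppose all entries of $H$ are in $\{-1,+1\}$. Then for $\alpha = 1/2$, the approximate factorization norm satisfies $\gamma_2(H, 1/2) \ge \frac{\sqrt{kN}}{2L}$. -/

import Mathlib

open scoped BigOperators

/-- Maximum ℓ₂ norm of a row. -/
noncomputable def rowNorm {ι d : Type*} [Fintype d] (R : Matrix ι d ℝ) : ℝ :=
  ⨆ i, Real.sqrt (∑ j, (R i j) ^ 2)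

/-- Maximum ℓ₂ norm of a column. -/
noncomputable def colNorm {d κ : Type*} [Fintype d] (A : Matrix d κ ℝ) : ℝ :=
  ⨆ j, Real.sqrt (∑ i, (A i j) ^ 2)

/-- The γ₂ factorization norm. -/
noncomputable def gamma2 {ι κ : Type*} [Fintype ι] [Fintype κ] (M : Matrix ι κ ℝ) : ℝ :=
  sInf {c | ∃ d : ℕ, ∃ R : Matrix ι (Fin d) ℝ, ∃ A : Matrix (Fin d) κ ℝ,
    R * A = M ∧ c = rowNorm R * colNorm A}

/-- Maximum absolute entry (the 1→∞ operator norm). -/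
noncomputable def linfNorm {ι κ : Type*} (M : Matrix ι κ ℝ) : ℝ :=
  ⨆ i, ⨆ j, |M i j|

/-- The approximate γ₂ norm. -/
noncomputable def gamma2Approx {ι κ : Type*} [Fintype ι] [Fintype κ]
    (W : Matrix ι κ ℝ) (α : ℝ) : ℝ :=
  sInf {c | ∃ W' : Matrix ι κ ℝ, linfNorm (W - W') ≤ α ∧ c = gamma2 W'}

/-- Matrix inner product. -/
def bullet {ι κ : Type*} [Fintype ι] [Fintype κ] (M N : Matrix ι κ ℝ) : ℝ :=
  ∑ i, ∑ j, M i j * N i j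

/-- Entrywise ℓ₁ norm. -/
def l1NormM {ι κ : Type*} [Fintype ι] [Fintype κ] (M : Matrix ι κ ℝ) : ℝ :=
  ∑ i, ∑ j, |M i j|

/-- The dual γ₂ norm. -/
noncomputable def gamma2Star {ι κ : Type*} [Fintype ι] [Fintype κ] (U : Matrix ι κ ℝ) : ℝ :=
  sSup {c | ∃ V : Matrix ι κ ℝ, gamma2 V ≤ 1 ∧ c = bullet U V}

/-- Spectral norm (2→2 operator norm). -/
noncomputable def norm2to2 {ι κ : Type*} [Fintype ι] [Fintype κ] (M : Matrix ι κ ℝ) : ℝ :=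
  sSup {c | ∃ x : κ → ℝ, (∑ j, (x j) ^ 2) ≤ 1 ∧ c = Real.sqrt (∑ i, (M.mulVec x i) ^ 2)}

/-- ∞→2 operator norm. -/
noncomputable def normInfTo2 {ι κ : Type*} [Fintype ι] [Fintype κ] (M : Matrix ι κ ℝ) : ℝ :=
  sSup {c | ∃ x : κ → ℝ, (∀ j, |x j| ≤ 1) ∧ c = Real.sqrt (∑ i, (M.mulVec x i) ^ 2)}

/-!
`H` is its own dual certificate. Since `H` is a `±1` matrix, any `W` with `‖H - W‖_∞ ≤ 1/2`
has `⟨W, H⟩ ≥ kN/2`. On the other hand, for a factorization `W = RA` we have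
`⟨RA, H⟩ = ⟨R, HAᵀ⟩`, and Cauchy–Schwarz together with Bessel's inequality `‖Hv‖ ≤ L‖v‖`
(which follows from `HHᵀ = L²I`) bounds this by `L √(kN) ‖R‖_{2→∞} ‖A‖_{1→2}`.
-/

open Matrix

variable {ι δ κ : Type*}

lemma le_of_mul_self_le_mul {α : Type*} [Ring α] [LinearOrder α] [IsStrictOrderedRing α]
    {x y : α} (hy : 0 ≤ y) (h : x * x ≤ x * y) : x ≤ y := by
  by_contra! hyx
  exact (mul_lt_mul_of_pos_left hyx (hy.trans_lt hyx)).not_ge h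

lemma rowNorm_nonneg [Fintype δ] (R : Matrix ι δ ℝ) : 0 ≤ rowNorm R :=
  Real.iSup_nonneg fun _ => Real.sqrt_nonneg _

lemma colNorm_nonneg [Fintype δ] (A : Matrix δ κ ℝ) : 0 ≤ colNorm A :=
  Real.iSup_nonneg fun _ => Real.sqrt_nonneg _

lemma sqrt_sum_sum_sq_le_sqrt_card_mul_rowNorm [Fintype ι] [Fintype δ] (R : Matrix ι δ ℝ) :
    √(∑ i, ∑ l, R i l ^ 2) ≤ √(Fintype.card ι) * rowNorm R := by
  rw [← Real.sqrt_sq (rowNorm_nonneg R), ← Real.sqrt_mul (Nat.cast_nonneg _)]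
  refine Real.sqrt_le_sqrt ?_
  calc ∑ i, ∑ l, R i l ^ 2 ≤ ∑ _i : ι, rowNorm R ^ 2 := by
        refine Finset.sum_le_sum fun i _ => ?_
        rw [← Real.sqrt_le_left (rowNorm_nonneg R)]
        exact le_ciSup (f := fun i => √(∑ l, R i l ^ 2)) (Set.finite_range _).bddAbove i
    _ = _ := by simp

lemma sqrt_sum_sum_sq_le_sqrt_card_mul_colNorm [Fintype δ] [Fintype κ] (A : Matrix δ κ ℝ) :
    √(∑ j, ∑ l, A l j ^ 2) ≤ √(Fintype.card κ) * colNorm A := by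
  simpa [rowNorm, colNorm] using sqrt_sum_sum_sq_le_sqrt_card_mul_rowNorm Aᵀ

lemma abs_le_linfNorm [Finite ι] [Finite κ] (M : Matrix ι κ ℝ) (i : ι) (j : κ) :
    |M i j| ≤ linfNorm M :=
  (le_ciSup (Set.finite_range _).bddAbove j).trans
    (le_ciSup (f := fun i => ⨆ j, |M i j|) (Set.finite_range _).bddAbove i)

lemma linfNorm_zero : linfNorm (0 : Matrix ι κ ℝ) = 0 := by
  simp [linfNorm]

lemma le_gamma2_of_forall_factorization [Fintype ι] [Fintype κ] {M : Matrix ι κ ℝ} {c : ℝ}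
    (h : ∀ (d : ℕ) (R : Matrix ι (Fin d) ℝ) (A : Matrix (Fin d) κ ℝ),
      R * A = M → c ≤ rowNorm R * colNorm A) :
    c ≤ gamma2 M := by
  classical
  let e := (Fintype.equivFin κ).symm
  have hM : M.submatrix id e * (1 : Matrix κ κ ℝ).submatrix e id = M := by
    rw [← submatrix_mul _ _ _ _ _ e.bijective, Matrix.mul_one, submatrix_id_id]
  refine le_csInf ⟨_, _, _, _, hM, rfl⟩ ?_
  rintro _ ⟨d, R, A, hRA, rfl⟩
  exact h d R A hRA

lemma le_gamma2Approx_of_forall [Fintype ι] [Fintype κ] {M : Matrix ι κ ℝ} {α c : ℝ}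
    (hα : 0 ≤ α) (h : ∀ W, linfNorm (M - W) ≤ α → c ≤ gamma2 W) :
    c ≤ gamma2Approx M α := by
  refine le_csInf ⟨_, M, by rwa [sub_self, linfNorm_zero], rfl⟩ ?_
  rintro _ ⟨W, hW, rfl⟩
  exact h W hW

lemma dotProduct_mulVec_self_le [Fintype ι] [DecidableEq ι] [Fintype κ] {U : Matrix ι κ ℝ}
    {L : ℝ} (hU : U * Uᵀ = L ^ 2 • 1) (v : κ → ℝ) :
    U *ᵥ v ⬝ᵥ U *ᵥ v ≤ L ^ 2 * (v ⬝ᵥ v) := by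
  set w := U *ᵥ v with hwv
  clear_value w
  have hw : w ⬝ᵥ w = Uᵀ *ᵥ w ⬝ᵥ v := by
    rw [mulVec_transpose, ← dotProduct_mulVec, hwv]
  have hUw : Uᵀ *ᵥ w ⬝ᵥ Uᵀ *ᵥ w = L ^ 2 * (w ⬝ᵥ w) := by
    rw [mulVec_transpose, ← dotProduct_mulVec, ← mulVec_transpose, mulVec_mulVec, hU]
    simp [smul_mulVec, dotProduct_smul]
  have hcs : (Uᵀ *ᵥ w ⬝ᵥ v) ^ 2 ≤ (Uᵀ *ᵥ w ⬝ᵥ Uᵀ *ᵥ w) * (v ⬝ᵥ v) := by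
    simpa only [dotProduct, ← sq] using Finset.sum_mul_sq_le_sq_mul_sq Finset.univ _ _
  rw [← hw, hUw] at hcs
  rw [sq, mul_comm (L ^ 2), mul_assoc] at hcs
  exact le_of_mul_self_le_mul
    (mul_nonneg (sq_nonneg L) (Fintype.sum_nonneg fun j => mul_self_nonneg (v j))) hcs

lemma sum_sum_mul_transpose_sq_le [Fintype ι] [DecidableEq ι] [Fintype δ] [Fintype κ]
    {U : Matrix ι κ ℝ} {L : ℝ} (hU : U * Uᵀ = L ^ 2 • 1) (B : Matrix δ κ ℝ) :
    ∑ i, ∑ l, (U * Bᵀ) i l ^ 2 ≤ L ^ 2 * ∑ j, ∑ l, B l j ^ 2 := by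
  have hrow (l : δ) : ∑ i, (U * Bᵀ) i l ^ 2 ≤ L ^ 2 * ∑ j, B l j ^ 2 := by
    simpa only [dotProduct, ← sq, mulVec, mul_apply, transpose_apply]
      using dotProduct_mulVec_self_le hU (B l)
  rw [Finset.sum_comm, Finset.sum_comm (f := fun j l => B l j ^ 2), Finset.mul_sum]
  exact Finset.sum_le_sum fun l _ => hrow l

lemma bullet_mul_eq [Fintype ι] [Fintype δ] [Fintype κ] (R : Matrix ι δ ℝ)
    (A : Matrix δ κ ℝ) (U : Matrix ι κ ℝ) :
    bullet (R * A) U = ∑ p : ι × δ, R p.1 p.2 * (U * Aᵀ) p.1 p.2 := by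
  simp only [bullet, Fintype.sum_prod_type, mul_apply, transpose_apply, Finset.sum_mul,
    Finset.mul_sum]
  refine Finset.sum_congr rfl fun i _ => ?_
  rw [Finset.sum_comm]
  exact Finset.sum_congr rfl fun l _ => Finset.sum_congr rfl fun j _ => by ring

lemma bullet_mul_le [Fintype ι] [DecidableEq ι] [Fintype δ] [Fintype κ] {U : Matrix ι κ ℝ}
    {L : ℝ} (hU : U * Uᵀ = L ^ 2 • 1) (hL : 0 ≤ L) (R : Matrix ι δ ℝ) (A : Matrix δ κ ℝ) :
    bullet (R * A) U ≤
      L * √(Fintype.card ι * Fintype.card κ) * (rowNorm R * colNorm A) := by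
  have hUA : √(∑ i, ∑ l, (U * Aᵀ) i l ^ 2) ≤ L * (√(Fintype.card κ) * colNorm A) := by
    calc √(∑ i, ∑ l, (U * Aᵀ) i l ^ 2) ≤ √(L ^ 2 * ∑ j, ∑ l, A l j ^ 2) :=
          Real.sqrt_le_sqrt (sum_sum_mul_transpose_sq_le hU A)
      _ = L * √(∑ j, ∑ l, A l j ^ 2) := by rw [Real.sqrt_mul (sq_nonneg L), Real.sqrt_sq hL]
      _ ≤ L * (√(Fintype.card κ) * colNorm A) :=
          mul_le_mul_of_nonneg_left (sqrt_sum_sum_sq_le_sqrt_card_mul_colNorm A) hL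
  calc bullet (R * A) U
      ≤ √(∑ i, ∑ l, R i l ^ 2) * √(∑ i, ∑ l, (U * Aᵀ) i l ^ 2) := by
        rw [bullet_mul_eq]
        simpa only [Fintype.sum_prod_type] using Real.sum_mul_le_sqrt_mul_sqrt Finset.univ
          (fun p : ι × δ => R p.1 p.2) (fun p => (U * Aᵀ) p.1 p.2)
    _ ≤ (√(Fintype.card ι) * rowNorm R) * (L * (√(Fintype.card κ) * colNorm A)) :=
        mul_le_mul (sqrt_sum_sum_sq_le_sqrt_card_mul_rowNorm R) hUA (Real.sqrt_nonneg _)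
          (mul_nonneg (Real.sqrt_nonneg _) (rowNorm_nonneg R))
    _ = L * √(Fintype.card ι * Fintype.card κ) * (rowNorm R * colNorm A) := by
        rw [Real.sqrt_mul (Nat.cast_nonneg _)]
        ring

lemma le_bullet_of_linfNorm_sub_le [Fintype ι] [Fintype κ] {H W : Matrix ι κ ℝ} {α : ℝ}
    (hH : ∀ i j, |H i j| = 1) (hW : linfNorm (H - W) ≤ α) :
    (1 - α) * (Fintype.card ι * Fintype.card κ) ≤ bullet W H := by
  have hentry (i : ι) (j : κ) : 1 - α ≤ W i j * H i j := by
    have hHH : H i j * H i j = 1 := by rw [← abs_mul_abs_self, hH, one_mul]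
    have hdev : (H - W) i j * H i j ≤ α := by
      calc (H - W) i j * H i j ≤ |(H - W) i j| * |H i j| := by rw [← abs_mul]; exact le_abs_self _
        _ ≤ α := by rw [hH, mul_one]; exact (abs_le_linfNorm _ i j).trans hW
    rw [Matrix.sub_apply] at hdev
    linarith
  calc (1 - α) * (Fintype.card ι * Fintype.card κ) = ∑ _i : ι, ∑ _j : κ, (1 - α) := by
        simp only [Finset.sum_const, Finset.card_univ, nsmul_eq_mul]
        ring
    _ ≤ bullet W H := Finset.sum_le_sum fun i _ => Finset.sum_le_sum fun j _ => hentry i j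

lemma mul_transpose_eq_smul_one_of_orthogonal [Fintype κ] [DecidableEq ι] {H : Matrix ι κ ℝ}
    {L : ℝ} (horth : ∀ i i', i ≠ i' → ∑ j, H i j * H i' j = 0)
    (hnorm : ∀ i, ∑ j, H i j ^ 2 = L ^ 2) :
    H * Hᵀ = L ^ 2 • 1 := by
  ext i i'
  rw [mul_apply, Matrix.smul_apply, one_apply]
  simp only [transpose_apply]
  split_ifs with h
  · subst h
    simp [← hnorm i, sq]
  · simpa using horth i i' h

/-- Lower bound on the approximate γ₂ norm of a ±1 matrix with pairwise orthogonal rows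
of ℓ₂ norm exactly `L`. -/
theorem gamma2Approx_hadamard_lb (k N : ℕ) (L : ℝ) (hL : 0 < L)
    (H : Matrix (Fin k) (Fin N) ℝ)
    (hentry : ∀ i j, H i j = 1 ∨ H i j = -1)
    (horth : ∀ i i', i ≠ i' → ∑ j, H i j * H i' j = 0)
    (hnorm : ∀ i, ∑ j, (H i j) ^ 2 = L ^ 2) :
    gamma2Approx H (1 / 2) ≥ Real.sqrt ((k : ℝ) * N) / (2 * L) := by
  have habs (i j) : |H i j| = 1 := by rcases hentry i j with h | h <;> simp [h]
  have hHH := mul_transpose_eq_smul_one_of_orthogonal horth hnorm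
  refine le_gamma2Approx_of_forall (by norm_num) fun W hW =>
    le_gamma2_of_forall_factorization fun d R A hRA => ?_
  have hlow := le_bullet_of_linfNorm_sub_le habs hW
  have hup := bullet_mul_le hHH hL.le R A
  rw [hRA] at hup
  simp only [Fintype.card_fin] at hlow hup
  have hs : √((k : ℝ) * N) * √((k : ℝ) * N) = k * N := Real.mul_self_sqrt (by positivity)
  rw [div_le_iff₀ (by positivity)]
  refine le_of_mul_self_le_mul (by positivity [rowNorm_nonneg R, colNorm_nonneg A]) ?_
  linarith
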